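/- Closed form of the auxiliary power series F₁: for every complex x ≠ 0, Σ_{k=0}^{∞} x^{2k+1} / ((2k+1)(2k+2)!!) = (1 − e^{x²/2})/x − i√(π/2) · erf(ix/√2). -/

import Mathlib

/-!
Since `(2k+2)‼ = 2^(k+1) (k+1)!`, partial fractions split the `k`-th term, with `y = x²/2`, into
`x · yᵏ / (k! (2k+1)) - y^(k+1) / ((k+1)! x)`. The second pieces form the tail of the exponential
series and sum to `(eʸ - 1)/x`. Writing the power series of `erf` as
`erf z = (2/√π) z Σ (-z²)ⁿ / (n! (2n+1))` and substituting `z = ix/√2`, for which `-z² = y`,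
identifies the sum of the first pieces with `-i √(π/2) erf(ix/√2)`.
-/

open Nat Complex

/-- The error function, extended to complex argument via its entire power series
`erf(z) = (2/√π) Σ (−1)ⁿ z^(2n+1)/(n!(2n+1))`. -/
noncomputable def cerf (z : ℂ) : ℂ :=
  (2 / (Real.sqrt Real.pi : ℂ)) *
    ∑' n : ℕ, (-1:ℂ)^n * z^(2*n+1) / ((n.factorial : ℂ) * (2*(n:ℂ)+1))

theorem cerf_eq_mul_tsum (z : ℂ) :
    cerf z = 2 / (Real.sqrt Real.pi : ℂ) * z *
      ∑' n : ℕ, (-z ^ 2) ^ n / ((n ! : ℂ) * (2 * n + 1)) := by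
  rw [cerf, mul_assoc, ← tsum_mul_left (a := z)]
  refine congrArg _ (tsum_congr fun n => ?_)
  rw [neg_pow (z ^ 2), ← pow_mul]
  ring

theorem summable_pow_div_factorial_mul_two_mul_add_one (y : ℂ) :
    Summable fun n : ℕ => y ^ n / ((n ! : ℂ) * (2 * n + 1)) := by
  refine (Real.summable_pow_div_factorial ‖y‖).of_norm_bounded fun n => ?_
  rw [norm_div, norm_pow, norm_mul, Complex.norm_natCast]
  gcongr
  refine le_mul_of_one_le_right (by positivity) ?_
  rw [show (2 * n + 1 : ℂ) = ((2 * n + 1 : ℕ) : ℂ) by push_cast; rfl, Complex.norm_natCast]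
  exact_mod_cast Nat.le_add_left 1 _

theorem hasSum_pow_succ_div_factorial (y : ℂ) :
    HasSum (fun k : ℕ => y ^ (k + 1) / ((k + 1)! : ℂ)) (Complex.exp y - 1) := by
  simpa [← Complex.exp_eq_exp_ℂ] using
    (hasSum_nat_add_iff' 1).mpr (NormedSpace.expSeries_div_hasSum_exp y)

theorem doubleFactorial_two_mul_add_two (k : ℕ) : (2 * k + 2)‼ = 2 ^ (k + 1) * (k + 1)! :=
  Nat.doubleFactorial_two_mul (k + 1)

/-- Partial fractions: `1 / ((2k+1)(2k+2)) = 1 / (2k+1) - 1 / (2k+2)`. -/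
theorem pow_div_mul_doubleFactorial_eq {x : ℂ} (hx : x ≠ 0) (k : ℕ) :
    x ^ (2 * k + 1) / ((2 * (k : ℂ) + 1) * (((2 * k + 2)‼ : ℕ) : ℂ))
      = x * ((x ^ 2 / 2) ^ k / ((k ! : ℂ) * (2 * k + 1)))
        - (x ^ 2 / 2) ^ (k + 1) / ((k + 1)! : ℂ) / x := by
  have hodd : (2 * (k : ℂ) + 1) ≠ 0 := by exact_mod_cast (2 * k).succ_ne_zero
  rw [doubleFactorial_two_mul_add_two, Nat.factorial_succ]
  push_cast
  rw [div_pow, div_pow]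
  field_simp
  ring

theorem sqrt_pi_div_two_mul_two_div_sqrt_pi_div_sqrt_two :
    (Real.sqrt (Real.pi / 2) : ℂ) * (2 / Real.sqrt Real.pi) / Real.sqrt 2 = 1 := by
  have hpi : Real.sqrt Real.pi ≠ 0 := (Real.sqrt_pos.mpr Real.pi_pos).ne'
  have hsq2 : Real.sqrt 2 * Real.sqrt 2 = 2 := Real.mul_self_sqrt zero_le_two
  rw [Real.sqrt_div' _ zero_le_two]
  norm_cast
  field_simp
  linarith

theorem F1_closed_form (x : ℂ) (hx : x ≠ 0) :
    ∑' k : ℕ, x^(2*k+1) / ((2*(k:ℂ)+1) * (((2*k+2)‼ : ℕ) : ℂ))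
      = (1 - Complex.exp (x^2/2)) / x
        - Complex.I * (Real.sqrt (Real.pi / 2) : ℂ) *
            cerf (Complex.I * x / (Real.sqrt 2 : ℂ)) := by
  set S := ∑' n : ℕ, (x ^ 2 / 2) ^ n / ((n ! : ℂ) * (2 * n + 1))
  have hseries : HasSum
      (fun k : ℕ => x ^ (2 * k + 1) / ((2 * (k : ℂ) + 1) * (((2 * k + 2)‼ : ℕ) : ℂ)))
      (x * S - (Complex.exp (x ^ 2 / 2) - 1) / x) := by
    simp_rw [pow_div_mul_doubleFactorial_eq hx]
    exact ((summable_pow_div_factorial_mul_two_mul_add_one _).hasSum.mul_left x).sub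
      ((hasSum_pow_succ_div_factorial _).div_const x)
  have hsq : -(Complex.I * x / (Real.sqrt 2 : ℂ)) ^ 2 = x ^ 2 / 2 := by
    rw [div_pow, mul_pow, I_sq, ← ofReal_pow, Real.sq_sqrt zero_le_two]
    push_cast
    ring
  rw [hseries.tsum_eq, cerf_eq_mul_tsum, hsq]
  linear_combination (-x * S) * sqrt_pi_div_two_mul_two_div_sqrt_pi_div_sqrt_two
    + ((Real.sqrt (Real.pi / 2) : ℂ) * (2 / Real.sqrt Real.pi) / Real.sqrt 2 * x * S) * I_sq
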